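/- arXiv:1803.02712 — 2 statements merged into one kernel-verified Lean document; each statement's English description precedes it below -/
import Mathlib

section
/- Pohozaev-type identity bound: Let γ > 0, ρ ≥ 0, ν₁, ν₂ ≥ 0, N ≥ (pρ)/2 + ((p−2)γ)/2, and let F be C², p-homogeneous (p > 2) with F > 0 off the origin. Let (u,v) ∈ C²([0,∞), ℝ²) be a bounded solution of −(e^{−γt}u')' + ν₁ e^{−ρt} u = e^{−Nt} ∂_u F(u,v), −(e^{−γt}v')' + ν₂ e^{−ρt} v = e^{−Nt} ∂_v F(u,v) on (0,∞) with u(0) = v(0) = 0. Then u'(0)² + v'(0)² ≥ (2(N+γ)/p) ∫₀^∞ ( ((e^{−γt}u)')² + ((e^{−γt}v)')² ) dt. -/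
/-!
For each component put `a = (e^{-γt} u)'` and `b = e^{-γt} u`, and let `θ = ((p - 1) γ - N) / p`,
the value for which Euler's identity cancels the `F`-terms below. Along solutions the energy
`E = Σ (a²/2 + θ a b + θ γ b²/2) + e^{-(N+γ)t} F(u,v) - e^{-(γ+ρ)t} (ν₁u² + ν₂v²)/2` satisfies
`E' = -((N+γ)/p) (a₁² + a₂²) + (θ - (γ-ρ)/2) e^{-(γ+ρ)t} (ν₁u² + ν₂v²)`,
and the hypothesis on `N` says exactly `θ ≤ (γ-ρ)/2`.
Hence `(N+γ)/p ∫₀^T (a₁² + a₂²) ≤ E(0) - E(T)`, where `E(0) = (u'(0)² + v'(0)²)/2` by the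
Dirichlet condition, while boundedness of `u, v` and `F ≥ 0` bound `E(T)` below by a quantity
tending to `0`.
-/

open Real Set Filter Topology MeasureTheory

theorem integral_Ioi_le_of_intervalIntegral_le {g B : ℝ → ℝ} {a A : ℝ} (hg : ∀ t, 0 ≤ g t)
    (hgi : ∀ T, IntegrableOn g (Ioc a T)) (hB : Tendsto B atTop (𝓝 A))
    (hgB : ∀ᶠ T in atTop, ∫ t in a..T, g t ≤ B T) :
    ∫ t in Ioi a, g t ≤ A := by
  have hint : IntegrableOn g (Ioi a) := by
    refine integrableOn_Ioi_of_intervalIntegral_norm_bounded (A + 1) a hgi tendsto_id ?_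
    filter_upwards [hgB, hB.eventually (eventually_le_nhds (lt_add_one A))] with T hT hBT
    simp only [Real.norm_of_nonneg (hg _)]
    linarith
  exact le_of_tendsto_of_tendsto (intervalIntegral_tendsto_integral_Ioi a hint tendsto_id) hB hgB

theorem integral_Ioi_le_of_hasDerivAt_le {E E' g L : ℝ → ℝ} {a : ℝ}
    (hE : ContinuousOn E (Ici a)) (hE' : ∀ t ∈ Ioi a, HasDerivAt E (E' t) t)
    (hE'g : ∀ t ∈ Ioi a, E' t ≤ -g t) (hg : ∀ t, 0 ≤ g t) (hgc : ContinuousOn g (Ici a))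
    (hL : Tendsto L atTop (𝓝 0)) (hLE : ∀ᶠ t in atTop, L t ≤ E t) :
    ∫ t in Ioi a, g t ≤ E a := by
  have hdecay : ∀ T, a ≤ T → ∫ t in a..T, g t ≤ E a - E T := by
    intro T hT
    have hsub := intervalIntegral.sub_le_integral_of_hasDeriv_right_of_le hT
      (hE.mono Icc_subset_Ici_self)
      (fun t ht => (hE' t ht.1).hasDerivWithinAt)
      (hgc.mono Icc_subset_Ici_self).integrableOn_Icc.neg (fun t ht => hE'g t ht.1)
    simp only [Pi.neg_apply, intervalIntegral.integral_neg] at hsub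
    linarith
  refine integral_Ioi_le_of_intervalIntegral_le hg
    (fun T => (hgc.mono Icc_subset_Ici_self).integrableOn_Icc.mono_set Ioc_subset_Icc_self)
    (by simpa using hL.const_sub (E a)) ?_
  filter_upwards [hLE, eventually_ge_atTop a] with T hLT hT
  linarith [hdecay T hT]

theorem tendsto_exp_neg_mul_mul_zero {c C : ℝ} {f : ℝ → ℝ} (hc : 0 < c)
    (hf : ∀ t ∈ Ici (0 : ℝ), |f t| ≤ C) : Tendsto (fun t => exp (-c * t) * f t) atTop (𝓝 0) := by
  refine Tendsto.zero_mul_isBoundedUnder_le ?_ ⟨C, eventually_map.2 ?_⟩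
  · exact tendsto_exp_atBot.comp (tendsto_id.const_mul_atTop_of_neg (neg_neg_of_pos hc))
  · filter_upwards [eventually_ge_atTop 0] with t ht
    exact hf t ht

theorem fderiv_apply_self_of_homogeneous {E : Type*} [NormedAddCommGroup E] [NormedSpace ℝ E]
    {F : E → ℝ} {p : ℝ} (hhom : ∀ t : ℝ, 0 < t → ∀ z, F (t • z) = t ^ p * F z) {z : E}
    (hF : DifferentiableAt ℝ F z) : fderiv ℝ F z z = p * F z := by
  have hline : HasDerivAt (fun t : ℝ => F (t • z)) (fderiv ℝ F z z) 1 := by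
    have hF' : HasFDerivAt F (fderiv ℝ F z) ((1 : ℝ) • z) := by simpa using hF.hasFDerivAt
    have hz : HasDerivAt (fun t : ℝ => t • z) z 1 := by
      simpa using (hasDerivAt_id (1 : ℝ)).smul_const z
    exact hF'.comp_hasDerivAt (1 : ℝ) hz
  have hpow : HasDerivAt (fun t : ℝ => t ^ p * F z) (p * F z) 1 := by
    simpa using ((hasDerivAt_rpow_const (x := 1) (p := p) (Or.inl one_ne_zero)).mul_const (F z))
  refine (hline.congr_of_eventuallyEq ?_).unique hpow
  filter_upwards [Ioi_mem_nhds one_pos] with t ht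
  exact (hhom t ht z).symm

theorem ContinuousLinearMap.apply_prod_eq (L : ℝ × ℝ →L[ℝ] ℝ) (a b : ℝ) :
    L (a, b) = a * L (1, 0) + b * L (0, 1) := by
  have hab : ((a, b) : ℝ × ℝ) = a • (1, 0) + b • (0, 1) := by simp
  rw [hab, map_add, map_smul, map_smul, smul_eq_mul, smul_eq_mul]

theorem hasDerivAt_exp_neg_mul_mul {γ t u' : ℝ} {u : ℝ → ℝ} (hu : HasDerivAt u u' t) :
    HasDerivAt (fun s => exp (-γ * s) * u s) (exp (-γ * t) * (u' - γ * u t)) t := by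
  have hexp : HasDerivAt (fun s => exp (-γ * s)) (-γ * exp (-γ * t)) t := by
    simpa [mul_comm] using ((hasDerivAt_id t).const_mul (-γ)).exp
  exact (hexp.mul hu).congr_deriv (by ring)

noncomputable def quadEnergy (γ θ : ℝ) (u u' : ℝ → ℝ) (t : ℝ) : ℝ :=
  (exp (-γ * t) * (u' t - γ * u t)) ^ 2 / 2
    + θ * (exp (-γ * t) * (u' t - γ * u t)) * (exp (-γ * t) * u t)
    + θ * γ * (exp (-γ * t) * u t) ^ 2 / 2

theorem hasDerivAt_quadEnergy {γ θ t w : ℝ} {u u' : ℝ → ℝ} (hu : HasDerivAt u (u' t) t)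
    (hw : HasDerivAt (fun s => exp (-γ * s) * u' s) w t) :
    HasDerivAt (quadEnergy γ θ u u')
      ((exp (-γ * t) * (u' t - γ * u t) + θ * (exp (-γ * t) * u t)) * w
        - (γ - θ) * (exp (-γ * t) * (u' t - γ * u t)) ^ 2) t := by
  have hb := hasDerivAt_exp_neg_mul_mul (γ := γ) hu
  have ha : HasDerivAt (fun s => exp (-γ * s) * (u' s - γ * u s))
      (w - γ * (exp (-γ * t) * (u' t - γ * u t))) t :=
    (hw.sub (hb.const_mul γ)).congr_of_eventuallyEq
      (.of_forall fun s => by simp only [Pi.sub_apply]; ring)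
  exact ((((ha.pow 2).div_const 2).add ((ha.const_mul θ).mul hb)).add
    ((hb.pow 2).const_mul (θ * γ) |>.div_const 2)).congr_deriv (by push_cast; ring)

theorem quadEnergy_ge (γ θ : ℝ) (u u' : ℝ → ℝ) (t : ℝ) :
    (θ * γ - θ ^ 2) / 2 * (exp (-γ * t) * u t) ^ 2 ≤ quadEnergy γ θ u u' t := by
  unfold quadEnergy
  nlinarith [sq_nonneg (exp (-γ * t) * (u' t - γ * u t) + θ * (exp (-γ * t) * u t))]

noncomputable def pohozaevEnergy (p γ ρ ν₁ ν₂ N : ℝ) (F : ℝ × ℝ → ℝ) (u v u' v' : ℝ → ℝ)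
    (t : ℝ) : ℝ :=
  quadEnergy γ (((p - 1) * γ - N) / p) u u' t + quadEnergy γ (((p - 1) * γ - N) / p) v v' t
    + exp (-(N + γ) * t) * F (u t, v t)
    - exp (-(γ + ρ) * t) * (ν₁ * u t ^ 2 + ν₂ * v t ^ 2) / 2

theorem hasDerivAt_pohozaevEnergy {p γ ρ ν₁ ν₂ N w₁ w₂ t : ℝ} {F : ℝ × ℝ → ℝ}
    {u v u' v' : ℝ → ℝ} (hp : p ≠ 0) (hF : DifferentiableAt ℝ F (u t, v t))
    (heuler : fderiv ℝ F (u t, v t) (u t, v t) = p * F (u t, v t))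
    (hu : HasDerivAt u (u' t) t) (hv : HasDerivAt v (v' t) t)
    (hw₁ : HasDerivAt (fun s => exp (-γ * s) * u' s) w₁ t)
    (hw₂ : HasDerivAt (fun s => exp (-γ * s) * v' s) w₂ t)
    (hequ : -w₁ + ν₁ * exp (-ρ * t) * u t = exp (-N * t) * fderiv ℝ F (u t, v t) (1, 0))
    (heqv : -w₂ + ν₂ * exp (-ρ * t) * v t = exp (-N * t) * fderiv ℝ F (u t, v t) (0, 1)) :
    HasDerivAt (pohozaevEnergy p γ ρ ν₁ ν₂ N F u v u' v')
      (-((N + γ) / p) * ((exp (-γ * t) * (u' t - γ * u t)) ^ 2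
          + (exp (-γ * t) * (v' t - γ * v t)) ^ 2)
        + (((p - 1) * γ - N) / p - (γ - ρ) / 2)
          * (exp (-(γ + ρ) * t) * (ν₁ * u t ^ 2 + ν₂ * v t ^ 2))) t := by
  set θ := ((p - 1) * γ - N) / p with hθ
  have hexp : ∀ c, HasDerivAt (fun s => exp (c * s)) (c * exp (c * t)) t := fun c => by
    simpa [mul_comm] using ((hasDerivAt_id t).const_mul c).exp
  have hFuv : HasDerivAt (fun s => F (u s, v s))
      (u' t * fderiv ℝ F (u t, v t) (1, 0) + v' t * fderiv ℝ F (u t, v t) (0, 1)) t := by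
    have := hF.hasFDerivAt.comp_hasDerivAt t (hu.prodMk hv)
    rwa [ContinuousLinearMap.apply_prod_eq] at this
  have hν : HasDerivAt (fun s => ν₁ * u s ^ 2 + ν₂ * v s ^ 2)
      (ν₁ * (2 * u t * u' t) + ν₂ * (2 * v t * v' t)) t :=
    (((hu.pow 2).const_mul ν₁).add ((hv.pow 2).const_mul ν₂)).congr_deriv (by push_cast; ring)
  have hE := (((hasDerivAt_quadEnergy (θ := θ) hu hw₁).add
    (hasDerivAt_quadEnergy (θ := θ) hv hw₂)).add ((hexp (-(N + γ))).mul hFuv)).sub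
    (((hexp (-(γ + ρ))).mul hν).div_const 2)
  refine hE.congr_deriv ?_
  rw [ContinuousLinearMap.apply_prod_eq] at heuler
  have hNγ : exp (-(N + γ) * t) = exp (-N * t) * exp (-γ * t) := by rw [← exp_add]; ring_nf
  have hγρ : exp (-(γ + ρ) * t) = exp (-γ * t) * exp (-ρ * t) := by rw [← exp_add]; ring_nf
  have hk : (N + γ) / p = γ - θ := by rw [hθ]; field_simp; ring
  have hθp : θ * p = (p - 1) * γ - N := by rw [hθ]; field_simp
  rw [hk, hNγ, hγρ]
  linear_combination -(exp (-γ * t) * (u' t - γ * u t) + θ * (exp (-γ * t) * u t)) * hequ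
    - (exp (-γ * t) * (v' t - γ * v t) + θ * (exp (-γ * t) * v t)) * heqv
    + exp (-N * t) * exp (-γ * t) * (γ - θ) * heuler
    - exp (-N * t) * exp (-γ * t) * F (u t, v t) * hθp

theorem continuousOn_pohozaevEnergy {p γ ρ ν₁ ν₂ N : ℝ} {F : ℝ × ℝ → ℝ} {u v u' v' : ℝ → ℝ}
    {s : Set ℝ} (hF : Continuous F) (hu : ContinuousOn u s) (hv : ContinuousOn v s)
    (hu' : ContinuousOn u' s) (hv' : ContinuousOn v' s) :
    ContinuousOn (pohozaevEnergy p γ ρ ν₁ ν₂ N F u v u' v') s := by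
  unfold pohozaevEnergy quadEnergy
  fun_prop

theorem pohozaevEnergy_zero {p γ ρ ν₁ ν₂ N : ℝ} {F : ℝ × ℝ → ℝ} {u v u' v' : ℝ → ℝ}
    (hF : F 0 = 0) (hu : u 0 = 0) (hv : v 0 = 0) :
    pohozaevEnergy p γ ρ ν₁ ν₂ N F u v u' v' 0 = (u' 0 ^ 2 + v' 0 ^ 2) / 2 := by
  simp only [pohozaevEnergy, quadEnergy, hu, hv, Prod.mk_zero_zero, hF, mul_zero, exp_zero]
  ring

theorem exists_tendsto_zero_le_pohozaevEnergy {p γ ρ ν₁ ν₂ N C : ℝ} {F : ℝ × ℝ → ℝ}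
    {u v u' v' : ℝ → ℝ} (hγ : 0 < γ) (hγρ : 0 < γ + ρ) (hF : ∀ z, 0 ≤ F z)
    (hC : ∀ t ∈ Ici (0 : ℝ), |u t| ≤ C ∧ |v t| ≤ C) :
    ∃ L : ℝ → ℝ, Tendsto L atTop (𝓝 0) ∧ ∀ t, L t ≤ pohozaevEnergy p γ ρ ν₁ ν₂ N F u v u' v' t := by
  set θ := ((p - 1) * γ - N) / p
  have hC2 : ∀ t ∈ Ici (0 : ℝ), |u t ^ 2| ≤ C ^ 2 ∧ |v t ^ 2| ≤ C ^ 2 := fun t ht => by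
    rw [abs_pow, abs_pow]
    exact ⟨pow_le_pow_left₀ (abs_nonneg _) (hC t ht).1 2,
      pow_le_pow_left₀ (abs_nonneg _) (hC t ht).2 2⟩
  refine ⟨fun t => (θ * γ - θ ^ 2) / 2 * ((exp (-γ * t) * u t) ^ 2 + (exp (-γ * t) * v t) ^ 2)
      - (ν₁ * (exp (-(γ + ρ) * t) * u t ^ 2) + ν₂ * (exp (-(γ + ρ) * t) * v t ^ 2)) / 2, ?_, ?_⟩
  · have hu := tendsto_exp_neg_mul_mul_zero hγ fun t ht => (hC t ht).1
    have hv := tendsto_exp_neg_mul_mul_zero hγ fun t ht => (hC t ht).2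
    have hu2 := tendsto_exp_neg_mul_mul_zero hγρ fun t ht => (hC2 t ht).1
    have hv2 := tendsto_exp_neg_mul_mul_zero hγρ fun t ht => (hC2 t ht).2
    simpa using ((((hu.pow 2).add (hv.pow 2)).const_mul ((θ * γ - θ ^ 2) / 2)).sub
      (((hu2.const_mul ν₁).add (hv2.const_mul ν₂)).div_const 2))
  · intro t
    have hFt : 0 ≤ exp (-(N + γ) * t) * F (u t, v t) := mul_nonneg (exp_pos _).le (hF _)
    have := quadEnergy_ge γ θ u u' t
    have := quadEnergy_ge γ θ v v' t
    unfold pohozaevEnergy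
    linarith

theorem stmt10 (p γ ρ ν₁ ν₂ N : ℝ) (hp : 2 < p) (hγ : 0 < γ) (hρ : 0 ≤ ρ)
    (hν₁ : 0 ≤ ν₁) (hν₂ : 0 ≤ ν₂) (hN : p * ρ / 2 + (p - 2) * γ / 2 ≤ N)
    (F : ℝ × ℝ → ℝ) (hF : ContDiff ℝ 2 F)
    (hhom : ∀ t : ℝ, 0 < t → ∀ z : ℝ × ℝ, F (t • z) = t ^ p * F z)
    (hpos : ∀ z : ℝ × ℝ, z ≠ 0 → 0 < F z)
    (u v u' v' w₁ w₂ : ℝ → ℝ)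
    (hbd : ∃ C, ∀ t ∈ Set.Ici (0:ℝ), |u t| ≤ C ∧ |v t| ≤ C)
    (hu : ∀ t ∈ Set.Ici (0:ℝ), HasDerivWithinAt u (u' t) (Set.Ici 0) t)
    (hv : ∀ t ∈ Set.Ici (0:ℝ), HasDerivWithinAt v (v' t) (Set.Ici 0) t)
    (hw₁ : ∀ t ∈ Set.Ici (0:ℝ),
      HasDerivWithinAt (fun s => Real.exp (-γ * s) * u' s) (w₁ t) (Set.Ici 0) t)
    (hw₂ : ∀ t ∈ Set.Ici (0:ℝ),
      HasDerivWithinAt (fun s => Real.exp (-γ * s) * v' s) (w₂ t) (Set.Ici 0) t)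
    (hcu : ContinuousOn u' (Set.Ici 0)) (hcv : ContinuousOn v' (Set.Ici 0))
    (hequ : ∀ t ∈ Set.Ioi (0:ℝ), -w₁ t + ν₁ * Real.exp (-ρ * t) * u t
        = Real.exp (-N * t) * fderiv ℝ F (u t, v t) (1, 0))
    (heqv : ∀ t ∈ Set.Ioi (0:ℝ), -w₂ t + ν₂ * Real.exp (-ρ * t) * v t
        = Real.exp (-N * t) * fderiv ℝ F (u t, v t) (0, 1))
    (hu0 : u 0 = 0) (hv0 : v 0 = 0) :
    2 * (N + γ) / p * ∫ t in Set.Ioi (0:ℝ),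
        ((Real.exp (-γ * t) * (u' t - γ * u t)) ^ 2
          + (Real.exp (-γ * t) * (v' t - γ * v t)) ^ 2)
      ≤ u' 0 ^ 2 + v' 0 ^ 2 := by
  obtain ⟨C, hC⟩ := hbd
  have hp0 : 0 < p := by linarith
  have hk : 0 ≤ (N + γ) / p := div_nonneg (by nlinarith) hp0.le
  have hθ : ((p - 1) * γ - N) / p - (γ - ρ) / 2 ≤ 0 := by
    rw [sub_nonpos, div_le_iff₀ hp0]
    nlinarith
  have hFd : Differentiable ℝ F := hF.differentiable (by norm_num)
  have heuler z := fderiv_apply_self_of_homogeneous hhom (hFd z)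
  have hF0 : F 0 = 0 := by simpa [hp0.ne'] using (heuler 0).symm
  have hFnn (z : ℝ × ℝ) : 0 ≤ F z := by
    rcases eq_or_ne z 0 with rfl | hz
    exacts [hF0.ge, (hpos z hz).le]
  obtain ⟨L, hL, hLE⟩ := exists_tendsto_zero_le_pohozaevEnergy (p := p) (ρ := ρ) (ν₁ := ν₁)
    (ν₂ := ν₂) (N := N) (u' := u') (v' := v') hγ (by linarith) hFnn hC
  have hcU : ContinuousOn u (Ici 0) := fun t ht => (hu t ht).continuousWithinAt
  have hcV : ContinuousOn v (Ici 0) := fun t ht => (hv t ht).continuousWithinAt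
  have hAt {f f' : ℝ → ℝ} (hf : ∀ t ∈ Ici (0 : ℝ), HasDerivWithinAt f (f' t) (Ici 0) t) (t : ℝ)
      (ht : t ∈ Ioi 0) : HasDerivAt f (f' t) t :=
    (hf t (Ioi_subset_Ici_self ht)).hasDerivAt (Ici_mem_nhds ht)
  have key := integral_Ioi_le_of_hasDerivAt_le
    (g := fun t => (N + γ) / p * ((exp (-γ * t) * (u' t - γ * u t)) ^ 2
      + (exp (-γ * t) * (v' t - γ * v t)) ^ 2))
    (continuousOn_pohozaevEnergy hF.continuous hcU hcV hcu hcv)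
    (fun t ht => hasDerivAt_pohozaevEnergy hp0.ne' (hFd _) (heuler _) (hAt hu t ht)
      (hAt hv t ht) (hAt hw₁ t ht) (hAt hw₂ t ht) (hequ t ht) (heqv t ht))
    (fun t _ => by
      have := mul_nonpos_of_nonpos_of_nonneg hθ
        (by positivity : 0 ≤ exp (-(γ + ρ) * t) * (ν₁ * u t ^ 2 + ν₂ * v t ^ 2))
      linarith)
    (fun t => by positivity) (by fun_prop) hL (.of_forall hLE)
  rw [integral_const_mul, pohozaevEnergy_zero hF0 hu0 hv0] at key
  rw [mul_div_assoc, mul_assoc]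
  linarith
end

section
/- Energy positivity implies non-decay: let F : ℝ² → ℝ be C² with F(u,v) > 0 for (u,v) ≠ (0,0) and F(0,0) = 0, and let (u,v) be a bounded nontrivial C² solution of −u'' = ∂_u F(u,v), −v'' = ∂_v F(u,v) on I = ℝ or (0,∞). Then it is not the case that both u(t) → 0 and v(t) → 0 as t → ∞. -/
/-!
Along a solution the energy `E = ½(u'² + v'²) + F(u, v)` is constant, and `E > 0 = F(0)` because
`F > 0` away from the origin. If `(u, v) → 0`, then `F(u, v) → F(0)` and, the origin being a
minimum of `F`, the forces `u''`, `v''` tend to `0`; hence `u'² + v'² → 2(E - F(0)) > 0`. Then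
`g = u² + v²` has `g'' = 2(u'² + v'²) + 2(u u'' + v v'')` with a positive limit, so `g → ∞`,
contradicting `g → 0`.
-/

open Set Filter Topology

lemma tendsto_atTop_of_hasDerivAt_of_eventually_le {f f' : ℝ → ℝ} {c : ℝ} (hc : 0 < c)
    (hf : ∀ᶠ t in atTop, HasDerivAt f (f' t) t) (hf' : ∀ᶠ t in atTop, c ≤ f' t) :
    Tendsto f atTop atTop := by
  obtain ⟨T, hT⟩ := (hf.and hf').exists_forall_of_atTop
  have hgrowth : ∀ t ∈ Ici T, c * (t - T) ≤ f t - f T := by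
    refine fun t ht ↦ (convex_Ici T).mul_sub_le_image_sub_of_le_deriv
      (fun s hs ↦ (hT s hs).1.continuousAt.continuousWithinAt)
      (fun s hs ↦ (hT s (interior_subset hs)).1.differentiableAt.differentiableWithinAt)
      (fun s hs ↦ ?_) T (mem_Ici.2 le_rfl) t ht ht
    rw [(hT s (interior_subset hs)).1.deriv]
    exact (hT s (interior_subset hs)).2
  refine tendsto_atTop_mono' _ (eventually_ge_atTop T |>.mono fun t ht ↦ ?_)
    (tendsto_atTop_add_const_right _ (f T - c * T) (tendsto_id.const_mul_atTop hc))
  dsimp only [id]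
  linarith [hgrowth t ht]

lemma tendsto_atTop_of_tendsto_deriv_deriv {f f' f'' : ℝ → ℝ} {L : ℝ} (hL : 0 < L)
    (hf : ∀ᶠ t in atTop, HasDerivAt f (f' t) t) (hf' : ∀ᶠ t in atTop, HasDerivAt f' (f'' t) t)
    (hf'' : Tendsto f'' atTop (𝓝 L)) : Tendsto f atTop atTop :=
  have hf'_top := tendsto_atTop_of_hasDerivAt_of_eventually_le (half_pos hL) hf'
    (hf''.eventually (eventually_ge_nhds (half_lt_self hL)))
  tendsto_atTop_of_hasDerivAt_of_eventually_le one_pos hf (hf'_top.eventually_ge_atTop 1)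

theorem not_tendsto_zero_of_tendsto_speed {u v u' v' u'' v'' : ℝ → ℝ} {L : ℝ} (hL : 0 < L)
    (hu : ∀ᶠ t in atTop, HasDerivAt u (u' t) t) (hu' : ∀ᶠ t in atTop, HasDerivAt u' (u'' t) t)
    (hv : ∀ᶠ t in atTop, HasDerivAt v (v' t) t) (hv' : ∀ᶠ t in atTop, HasDerivAt v' (v'' t) t)
    (hu'' : Tendsto u'' atTop (𝓝 0)) (hv'' : Tendsto v'' atTop (𝓝 0))
    (hspeed : Tendsto (fun t ↦ u' t ^ 2 + v' t ^ 2) atTop (𝓝 L)) :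
    ¬ (Tendsto u atTop (𝓝 0) ∧ Tendsto v atTop (𝓝 0)) := by
  rintro ⟨hu0, hv0⟩
  have hg_top : Tendsto (fun t ↦ u t ^ 2 + v t ^ 2) atTop atTop := by
    refine tendsto_atTop_of_tendsto_deriv_deriv (f' := fun t ↦ 2 * (u t * u' t + v t * v' t))
      (f'' := fun t ↦ 2 * (u' t ^ 2 + v' t ^ 2) + 2 * (u t * u'' t + v t * v'' t))
      (by positivity : 0 < 2 * L) ?_ ?_ ?_
    · filter_upwards [hu, hv] with t hut hvt
      exact ((hut.pow 2).add (hvt.pow 2)).congr_deriv (by ring)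
    · filter_upwards [hu, hu', hv, hv'] with t hut hut' hvt hvt'
      exact (((hut.mul hut').add (hvt.mul hvt')).const_mul 2).congr_deriv (by ring)
    · simpa using (hspeed.const_mul 2).add (((hu0.mul hu'').add (hv0.mul hv'')).const_mul 2)
  have hg_zero : Tendsto (fun t ↦ u t ^ 2 + v t ^ 2) atTop (𝓝 0) := by
    simpa using (hu0.pow 2).add (hv0.pow 2)
  exact not_tendsto_atTop_of_tendsto_nhds hg_zero hg_top

lemma tendsto_fderiv_apply_of_isLocalMin {E : Type*} [NormedAddCommGroup E] [NormedSpace ℝ E]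
    {F : E → ℝ} (hF : ContDiff ℝ 1 F) {x₀ : E} (hmin : IsLocalMin F x₀) {α : Type*}
    {l : Filter α} {γ : α → E} (hγ : Tendsto γ l (𝓝 x₀)) (w : E) :
    Tendsto (fun t ↦ fderiv ℝ F (γ t) w) l (𝓝 0) := by
  have h := ((hF.continuous_fderiv one_ne_zero).tendsto x₀).comp hγ
  rw [hmin.fderiv_eq_zero] at h
  simpa [Function.comp_def] using ((ContinuousLinearMap.apply ℝ ℝ w).continuous.tendsto 0).comp h

noncomputable def energy (F : ℝ × ℝ → ℝ) (u v u' v' : ℝ → ℝ) (t : ℝ) : ℝ :=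
  (u' t ^ 2 + v' t ^ 2) / 2 + F (u t, v t)

lemma hasDerivAt_energy {F : ℝ × ℝ → ℝ} {u v u' v' u'' v'' : ℝ → ℝ} {t : ℝ}
    (hF : DifferentiableAt ℝ F (u t, v t))
    (hu : HasDerivAt u (u' t) t) (hu' : HasDerivAt u' (u'' t) t)
    (hv : HasDerivAt v (v' t) t) (hv' : HasDerivAt v' (v'' t) t)
    (hequ : -u'' t = fderiv ℝ F (u t, v t) (1, 0))
    (heqv : -v'' t = fderiv ℝ F (u t, v t) (0, 1)) :
    HasDerivAt (energy F u v u' v') 0 t := by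
  have hchain := hF.hasFDerivAt.comp_hasDerivAt t (hu.prodMk hv)
  have hsplit : (u' t, v' t) = u' t • ((1 : ℝ), (0 : ℝ)) + v' t • ((0 : ℝ), (1 : ℝ)) := by
    ext <;> simp
  -- the potential term `u' ∂ᵤF + v' ∂ᵥF = -(u' u'' + v' v'')` cancels the kinetic one
  rw [hsplit, map_add, map_smul, map_smul, ← hequ, ← heqv] at hchain
  exact ((((hu'.pow 2).add (hv'.pow 2)).div_const 2).add hchain).congr_deriv
    (by simp only [smul_eq_mul]; ring)

theorem not_tendsto_zero_of_eventually_energy_eq {F : ℝ × ℝ → ℝ} (hF : ContDiff ℝ 1 F)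
    (hmin : IsLocalMin F 0) {u v u' v' u'' v'' : ℝ → ℝ}
    (hu : ∀ᶠ t in atTop, HasDerivAt u (u' t) t) (hu' : ∀ᶠ t in atTop, HasDerivAt u' (u'' t) t)
    (hv : ∀ᶠ t in atTop, HasDerivAt v (v' t) t) (hv' : ∀ᶠ t in atTop, HasDerivAt v' (v'' t) t)
    (hequ : ∀ᶠ t in atTop, -u'' t = fderiv ℝ F (u t, v t) (1, 0))
    (heqv : ∀ᶠ t in atTop, -v'' t = fderiv ℝ F (u t, v t) (0, 1))
    {c : ℝ} (hc : F 0 < c) (hE : ∀ᶠ t in atTop, energy F u v u' v' t = c) :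
    ¬ (Tendsto u atTop (𝓝 0) ∧ Tendsto v atTop (𝓝 0)) := by
  intro hlim
  have hγ : Tendsto (fun t ↦ (u t, v t)) atTop (𝓝 0) := hlim.1.prodMk_nhds hlim.2
  have hu'' : Tendsto u'' atTop (𝓝 0) := by
    have h := (tendsto_fderiv_apply_of_isLocalMin hF hmin hγ (1, 0)).neg
    rw [neg_zero] at h
    exact h.congr' (hequ.mono fun t ht ↦ by rw [← ht, neg_neg])
  have hv'' : Tendsto v'' atTop (𝓝 0) := by
    have h := (tendsto_fderiv_apply_of_isLocalMin hF hmin hγ (0, 1)).neg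
    rw [neg_zero] at h
    exact h.congr' (heqv.mono fun t ht ↦ by rw [← ht, neg_neg])
  have hspeed : Tendsto (fun t ↦ u' t ^ 2 + v' t ^ 2) atTop (𝓝 (2 * (c - F 0))) := by
    have hFγ := ((hF.continuous.tendsto 0).comp hγ).const_sub c |>.const_mul 2
    refine hFγ.congr' (hE.mono fun t ht ↦ ?_)
    simp only [energy] at ht
    simp only [Function.comp_apply]
    linarith
  exact not_tendsto_zero_of_tendsto_speed (by linarith) hu hu' hv hv' hu'' hv'' hspeed hlim

theorem stmt19_general (I : Set ℝ) (hI : I = Set.univ ∨ I = Set.Ioi 0)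
    (F : ℝ × ℝ → ℝ) (hF : ContDiff ℝ 2 F) (hF0 : F (0, 0) = 0)
    (hpos : ∀ z : ℝ × ℝ, z ≠ 0 → 0 < F z)
    (u v u' v' u'' v'' : ℝ → ℝ)
    (hu : ∀ t ∈ I, HasDerivAt u (u' t) t) (hu' : ∀ t ∈ I, HasDerivAt u' (u'' t) t)
    (hv : ∀ t ∈ I, HasDerivAt v (v' t) t) (hv' : ∀ t ∈ I, HasDerivAt v' (v'' t) t)
    (hequ : ∀ t ∈ I, -u'' t = fderiv ℝ F (u t, v t) (1, 0))
    (heqv : ∀ t ∈ I, -v'' t = fderiv ℝ F (u t, v t) (0, 1))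
    (hnt : ∃ t ∈ I, (u t, v t) ≠ (0, 0)) :
    ¬ (Filter.Tendsto u Filter.atTop (nhds 0) ∧
       Filter.Tendsto v Filter.atTop (nhds 0)) := by
  obtain ⟨t₀, ht₀, hne⟩ := hnt
  obtain ⟨hI_open, hI_conn, hI_atTop⟩ :
      IsOpen I ∧ IsPreconnected I ∧ ∀ᶠ t in atTop, t ∈ I := by
    rcases hI with rfl | rfl
    exacts [⟨isOpen_univ, isPreconnected_univ, univ_mem⟩,
      ⟨isOpen_Ioi, isPreconnected_Ioi, Ioi_mem_atTop 0⟩]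
  have hF1 : ContDiff ℝ 1 F := hF.of_le one_le_two
  have hdE (t : ℝ) (ht : t ∈ I) : HasDerivAt (energy F u v u' v') 0 t :=
    hasDerivAt_energy (hF1.differentiable one_ne_zero _) (hu t ht) (hu' t ht) (hv t ht)
      (hv' t ht) (hequ t ht) (heqv t ht)
  have hE (t : ℝ) (ht : t ∈ I) : energy F u v u' v' t = energy F u v u' v' t₀ :=
    hI_open.is_const_of_deriv_eq_zero hI_conn
      (fun s hs ↦ (hdE s hs).differentiableAt.differentiableWithinAt)
      (fun s hs ↦ (hdE s hs).deriv) ht ht₀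
  have hc : F 0 < energy F u v u' v' t₀ := by
    have := hpos (u t₀, v t₀) hne
    rw [energy, show F 0 = 0 from hF0]
    positivity
  have hmin : IsLocalMin F 0 := .of_forall fun z ↦ by
    rcases eq_or_ne z 0 with rfl | hz
    exacts [le_rfl, hF0 ▸ (hpos z hz).le]
  exact not_tendsto_zero_of_eventually_energy_eq hF1 hmin (hI_atTop.mono hu) (hI_atTop.mono hu')
    (hI_atTop.mono hv) (hI_atTop.mono hv') (hI_atTop.mono hequ) (hI_atTop.mono heqv) hc
    (hI_atTop.mono hE)

theorem stmt19 (I : Set ℝ) (hI : I = Set.univ ∨ I = Set.Ioi 0)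
    (F : ℝ × ℝ → ℝ) (hF : ContDiff ℝ 2 F) (hF0 : F (0, 0) = 0)
    (hpos : ∀ z : ℝ × ℝ, z ≠ 0 → 0 < F z)
    (u v u' v' u'' v'' : ℝ → ℝ)
    (hbd : ∃ C, ∀ t ∈ I, |u t| ≤ C ∧ |v t| ≤ C)
    (hu : ∀ t ∈ I, HasDerivAt u (u' t) t) (hu' : ∀ t ∈ I, HasDerivAt u' (u'' t) t)
    (hv : ∀ t ∈ I, HasDerivAt v (v' t) t) (hv' : ∀ t ∈ I, HasDerivAt v' (v'' t) t)
    (hequ : ∀ t ∈ I, -u'' t = fderiv ℝ F (u t, v t) (1, 0))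
    (heqv : ∀ t ∈ I, -v'' t = fderiv ℝ F (u t, v t) (0, 1))
    (hnt : ∃ t ∈ I, (u t, v t) ≠ (0, 0)) :
    ¬ (Filter.Tendsto u Filter.atTop (nhds 0) ∧
       Filter.Tendsto v Filter.atTop (nhds 0)) :=
  stmt19_general I hI F hF hF0 hpos u v u' v' u'' v'' hu hu' hv hv' hequ heqv hnt
end
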